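/- arXiv:1311.2502 — 9 statements merged into one kernel-verified Lean document; each statement's English description precedes it below -/
import Mathlib

section
/- Let m, a, h be positive real numbers and set X = 12ma − h². Define the 2×2 real matrices L_J = [[X/(12ha), 1/2], [1/2, −a/h]] and R_J = [[X/(12ha), −1/2], [−1/2, −a/h]], and let A_J = L_J⁻¹ · R_J (the MCAP Jquad amplification matrix). Then L_J is invertible (its determinant equals −(6ma + h²)/(6h²) ≠ 0) and det A_J = 1; in particular, A_J is a symplectic 2×2 matrix. -/
/-! The right-hand matrix `R_J` is `L_J` with its off-diagonal entries negated, which does not change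
a 2×2 determinant; hence `det A_J = det R_J / det L_J = 1` as soon as `det L_J ≠ 0`. -/

namespace Matrix

theorem det_fin_two_of_neg_offDiag {R : Type*} [CommRing R] (p q q' r : R) :
    (!![p, -q; -q', r]).det = (!![p, q; q', r]).det := by
  simp only [det_fin_two_of, neg_mul_neg]

theorem det_nonsing_inv_mul_of_det_eq {n R : Type*} [Fintype n] [DecidableEq n] [CommRing R]
    {A B : Matrix n n R} (hA : IsUnit A.det) (hBA : B.det = A.det) : (A⁻¹ * B).det = 1 := by
  rw [det_mul, det_nonsing_inv, hBA, Ring.inverse_mul_cancel _ hA]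

end Matrix

open Matrix

/-- The MCAP Jquad amplification matrix for the free undamped SDOF oscillator:
`L_J` is invertible (its determinant equals `-(6ma + h²)/(6h²) ≠ 0`) and `det A_J = 1`,
so `A_J` is a symplectic 2×2 matrix. -/
theorem mcap_jquad_symplectic (m a h : ℝ) (hm : 0 < m) (ha : 0 < a) (hh : 0 < h) :
    let X : ℝ := 12 * m * a - h ^ 2
    let L : Matrix (Fin 2) (Fin 2) ℝ := !![X / (12 * h * a), 1 / 2; 1 / 2, -a / h]
    let R : Matrix (Fin 2) (Fin 2) ℝ := !![X / (12 * h * a), -1 / 2; -1 / 2, -a / h]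
    let A : Matrix (Fin 2) (Fin 2) ℝ := L⁻¹ * R
    L.det = -(6 * m * a + h ^ 2) / (6 * h ^ 2) ∧ L.det ≠ 0 ∧ IsUnit L.det ∧ A.det = 1 := by
  intro X L R A
  have hdetL : L.det = -(6 * m * a + h ^ 2) / (6 * h ^ 2) := by
    simp only [L, X, det_fin_two_of]
    field_simp
    ring
  have hdetL_ne : L.det ≠ 0 := by
    rw [hdetL]
    exact div_ne_zero (neg_ne_zero.mpr (by positivity)) (by positivity)
  have hdetR : R.det = L.det := by
    simp only [R, L, neg_div]
    exact det_fin_two_of_neg_offDiag _ _ _ _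
  exact ⟨hdetL, hdetL_ne, hdetL_ne.isUnit, det_nonsing_inv_mul_of_det_eq hdetL_ne.isUnit hdetR⟩
end

section
/- Let m, a, h be positive real numbers with h² < 12ma, and set X = 12ma − h². Let A_J = L_J⁻¹ · R_J with L_J = [[X/(12ha), 1/2], [1/2, −a/h]] and R_J = [[X/(12ha), −1/2], [−1/2, −a/h]]. Then the eigenvalues of the complexification of A_J (the matrix with entries viewed in ℂ) are exactly the two complex numbers λ± = ((6ma − 2h²) ± i·√(36h²ma − 3h⁴)) / (6ma + h²). -/
/-!
Since `A = L⁻¹ R`, the eigenvalues are the roots of `det (z L - R)`. The matrix `R` is `L` with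
its off-diagonal entries negated, so for `L = !![α, β; β, δ]` this determinant is the palindromic
quadratic `c z² - 2 d z + c` with `c = αδ - β²`, `d = αδ + β²`; here it is proportional to
`q z² - 2 p z + q` with `q = 6ma + h²`, `p = 6ma - 2h²`. As `q² - p² = 3h²(12ma - h²) > 0`,
its roots are the conjugate pair `(p ± i√(q² - p²)) / q`.
-/

open Matrix Complex

namespace Matrix

variable {n : Type*} [Fintype n] [DecidableEq n]

theorem map_nonsing_inv {K F : Type*} [Field K] [Field F] (f : K →+* F) (M : Matrix n n K) :
    M⁻¹.map f = (M.map f)⁻¹ := by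
  by_cases hM : IsUnit M.det
  · refine (inv_eq_right_inv ?_).symm
    rw [← f.mapMatrix_apply, ← f.mapMatrix_apply, ← map_mul, mul_nonsing_inv M hM, map_one]
  · have hfM : ¬IsUnit (M.map f).det := by
      rwa [← RingHom.mapMatrix_apply, ← f.map_det, isUnit_map_iff]
    rw [nonsing_inv_apply_not_isUnit M hM, nonsing_inv_apply_not_isUnit _ hfM,
      Matrix.map_zero f (map_zero f)]

theorem spectrum_nonsing_inv_mul {K : Type*} [Field K] {L R : Matrix n n K} (hL : IsUnit L.det) :
    spectrum K (L⁻¹ * R) = {z | (z • L - R).det = 0} := by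
  ext z
  have hfactor : algebraMap K (Matrix n n K) z - L⁻¹ * R = L⁻¹ * (z • L - R) := by
    rw [Algebra.algebraMap_eq_smul_one, Matrix.mul_sub, Matrix.mul_smul, nonsing_inv_mul L hL]
  rw [spectrum.mem_iff, hfactor, isUnit_iff_isUnit_det, det_mul, IsUnit.mul_iff, det_nonsing_inv,
    Ring.inverse_eq_inv', Set.mem_ofPred_eq, isUnit_iff_ne_zero, isUnit_iff_ne_zero]
  simp [isUnit_iff_ne_zero.mp hL]

theorem det_smul_sub_reflected_pencil {R : Type*} [CommRing R] (α β δ z : R) :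
    (z • !![α, β; β, δ] - !![α, -β; -β, δ]).det =
      (α * δ - β ^ 2) * z ^ 2 - 2 * (α * δ + β ^ 2) * z + (α * δ - β ^ 2) := by
  rw [det_fin_two]
  simp only [smul_of, smul_cons, smul_eq_mul, smul_empty, sub_apply, of_apply, cons_val',
    cons_val_zero, cons_val_fin_one, cons_val_one, sub_neg_eq_add]
  ring

theorem spectrum_map_reflected_pencil {K F : Type*} [Field K] [Field F] (f : K →+* F)
    {α β δ : K} (hdet : α * δ - β ^ 2 ≠ 0) :
    spectrum F ((!![α, β; β, δ]⁻¹ * !![α, -β; -β, δ]).map f) =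
      {z | f (α * δ - β ^ 2) * z ^ 2 - 2 * f (α * δ + β ^ 2) * z + f (α * δ - β ^ 2) = 0} := by
  have hmap : ∀ a b c d : K, !![a, b; c, d].map f = !![f a, f b; f c, f d] := fun a b c d => by
    ext i j; fin_cases i <;> fin_cases j <;> rfl
  have hunit : IsUnit (!![α, β; β, δ].map f).det := by
    rw [hmap, det_fin_two_of, isUnit_iff_ne_zero, ← map_mul, ← map_mul, ← map_sub, ← sq]
    exact (map_ne_zero f).mpr hdet
  rw [Matrix.map_mul, map_nonsing_inv, spectrum_nonsing_inv_mul hunit, hmap, hmap, map_neg]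
  simp only [det_smul_sub_reflected_pencil, map_sub, map_add, map_mul, map_pow]

end Matrix

theorem palindromic_quadratic_eq_zero_iff {K : Type*} [Field K] [NeZero (2 : K)] {p q w : K}
    (hq : q ≠ 0) (hw : w ^ 2 = p ^ 2 - q ^ 2) (z : K) :
    q * z ^ 2 - 2 * p * z + q = 0 ↔ z = (p + w) / q ∨ z = (p - w) / q := by
  have hdiscrim : discrim q (-2 * p) q = (2 * w) * (2 * w) := by
    rw [discrim]; linear_combination (-4) * hw
  convert quadratic_eq_zero_iff hq hdiscrim z using 3
  · ring
  all_goals field_simp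

/-- Eigenvalues of the MCAP Jquad amplification matrix for `h² < 12ma`: they are exactly
`((6ma - 2h²) ± i√(36h²ma - 3h⁴)) / (6ma + h²)`. -/
theorem mcap_jquad_eigenvalues (m a h : ℝ) (hm : 0 < m) (ha : 0 < a) (hh : 0 < h)
    (hsmall : h ^ 2 < 12 * m * a) :
    let X : ℝ := 12 * m * a - h ^ 2
    let L : Matrix (Fin 2) (Fin 2) ℝ := !![X / (12 * h * a), 1 / 2; 1 / 2, -a / h]
    let R : Matrix (Fin 2) (Fin 2) ℝ := !![X / (12 * h * a), -1 / 2; -1 / 2, -a / h]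
    let A : Matrix (Fin 2) (Fin 2) ℝ := L⁻¹ * R
    spectrum ℂ (A.map Complex.ofReal) =
      {(Complex.ofReal (6 * m * a - 2 * h ^ 2) +
          Complex.I * Complex.ofReal (Real.sqrt (36 * h ^ 2 * m * a - 3 * h ^ 4))) /
          Complex.ofReal (6 * m * a + h ^ 2),
       (Complex.ofReal (6 * m * a - 2 * h ^ 2) -
          Complex.I * Complex.ofReal (Real.sqrt (36 * h ^ 2 * m * a - 3 * h ^ 4))) /
          Complex.ofReal (6 * m * a + h ^ 2)} := by
  intro X L R A
  set p : ℝ := 6 * m * a - 2 * h ^ 2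
  set q : ℝ := 6 * m * a + h ^ 2
  set s : ℝ := Real.sqrt (36 * h ^ 2 * m * a - 3 * h ^ 4)
  have hq : q ≠ 0 := by positivity
  have hdiff : X / (12 * h * a) * (-a / h) - (1 / 2) ^ 2 = -q / (6 * h ^ 2) := by
    field_simp; ring
  have hsum : X / (12 * h * a) * (-a / h) + (1 / 2) ^ 2 = -p / (6 * h ^ 2) := by
    field_simp; ring
  have hw : ((I * s) ^ 2 : ℂ) = p ^ 2 - q ^ 2 := by
    rw [mul_pow, I_sq, ← ofReal_pow, Real.sq_sqrt (by nlinarith)]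
    simp only [p, q]
    push_cast
    ring
  have hR : R = !![X / (12 * h * a), -(1 / 2); -(1 / 2), -a / h] := by simp only [R, neg_div]
  have hdet : X / (12 * h * a) * (-a / h) - (1 / 2) ^ 2 ≠ 0 := by
    rw [hdiff]; exact div_ne_zero (neg_ne_zero.mpr hq) (by positivity)
  have hscale : ∀ z : ℂ, ofRealHom (-q / (6 * h ^ 2)) * z ^ 2 - 2 * ofRealHom (-p / (6 * h ^ 2)) * z
      + ofRealHom (-q / (6 * h ^ 2)) = -(6 * (h : ℂ) ^ 2)⁻¹ * (q * z ^ 2 - 2 * p * z + q) := by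
    intro z; simp only [ofRealHom_eq_coe]; push_cast; ring
  have hscale_ne : -(6 * (h : ℂ) ^ 2)⁻¹ ≠ 0 := by simp [hh.ne']
  change spectrum ℂ ((L⁻¹ * R).map ofRealHom) = _
  rw [hR, spectrum_map_reflected_pencil ofRealHom hdet, hdiff, hsum]
  ext z
  rw [Set.mem_ofPred_eq, hscale, mul_eq_zero, or_iff_right hscale_ne,
    palindromic_quadratic_eq_zero_iff (by exact_mod_cast hq) hw, Set.mem_insert_iff,
    Set.mem_singleton_iff]
end

section
/- Let m, a, h be positive real numbers with h² ≤ 12ma, and set X = 12ma − h². Let A_J = L_J⁻¹ · R_J with L_J = [[X/(12ha), 1/2], [1/2, −a/h]] and R_J = [[X/(12ha), −1/2], [−1/2, −a/h]]. Then every complex eigenvalue λ of the complexification of A_J satisfies |λ| = 1; in particular the MCAP Jquad scheme is energy conserving and stable for every time step h with h² ≤ 12ma. -/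
/-!
Since `L * A = R`, an eigenvalue `λ` of `A` is a root of `det (λ L - R)`, which for these
matrices is `-(x (λ - 1)² + y (λ + 1)²)` with `x = X / (12 h²) ≥ 0` and `y = 1 / 4`.
This factors as `-(λ z - z̄)(λ z̄ - z)` with `z = √x + i √y ≠ 0`, so `λ` maps a nonzero
complex number to its conjugate and therefore has modulus one.
-/

open ComplexConjugate

namespace Complex

theorem norm_eq_one_of_mul_eq_conj {w z : ℂ} (hz : z ≠ 0) (h : w * z = conj z) :
    ‖w‖ = 1 := by
  have hnorm : ‖w‖ * ‖z‖ = 1 * ‖z‖ := by rw [← norm_mul, h, norm_conj, one_mul]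
  exact mul_right_cancel₀ (norm_ne_zero_iff.mpr hz) hnorm

theorem norm_eq_one_of_mul_sub_one_sq_add_mul_add_one_sq_eq_zero {x y : ℝ} (hx : 0 ≤ x)
    (hy : 0 < y) {w : ℂ} (h : x * (w - 1) ^ 2 + y * (w + 1) ^ 2 = 0) : ‖w‖ = 1 := by
  set z : ℂ := √x + √y * I
  have hz : z ≠ 0 := fun hz => (Real.sqrt_pos.mpr hy).ne' (by simpa [z] using congrArg im hz)
  have hx' : ((√x : ℝ) : ℂ) ^ 2 = x := by exact_mod_cast Real.sq_sqrt hx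
  have hy' : ((√y : ℝ) : ℂ) ^ 2 = y := by exact_mod_cast Real.sq_sqrt hy.le
  have hconj : conj z = √x - √y * I := by simp [z, conj_ofReal, conj_I, sub_eq_add_neg]
  have hfactor : (w * z - conj z) * (w * conj z - z) = 0 := by
    rw [hconj]
    linear_combination
      h + (w - 1) ^ 2 * hx' + (w + 1) ^ 2 * hy' - (√y : ℂ) ^ 2 * (w + 1) ^ 2 * I_sq
  rcases mul_eq_zero.mp hfactor with hw | hw
  · exact norm_eq_one_of_mul_eq_conj hz (sub_eq_zero.mp hw)
  · refine norm_eq_one_of_mul_eq_conj ((map_ne_zero (starRingEnd ℂ)).mpr hz) ?_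
    rw [conj_conj]
    exact sub_eq_zero.mp hw

end Complex

namespace Matrix

theorem not_isUnit_det_smul_sub_of_mul_eq {n K : Type*} [Fintype n] [DecidableEq n]
    [CommRing K] {L A R : Matrix n n K} (hLA : L * A = R) {lam : K}
    (hlam : lam ∈ spectrum K A) : ¬IsUnit (lam • L - R).det := by
  have hpencil : lam • L - R = L * (algebraMap K (Matrix n n K) lam - A) := by
    rw [mul_sub, hLA, Algebra.algebraMap_eq_smul_one, Matrix.mul_smul, mul_one]
  rw [hpencil, det_mul]
  exact fun hunit => spectrum.mem_iff.mp hlam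
    ((isUnit_iff_isUnit_det _).mpr (isUnit_of_mul_isUnit_right hunit))

end Matrix

open Matrix

theorem det_jquad_lhs {K : Type*} [Field K] (c e : K) :
    (!![c, 1 / 2; 1 / 2, e] : Matrix (Fin 2) (Fin 2) K).det = c * e - (1 / 2) ^ 2 := by
  rw [det_fin_two_of]; ring

theorem det_smul_jquad_lhs_sub_rhs (c e : ℝ) (lam : ℂ) :
    (lam • (!![c, 1 / 2; 1 / 2, e] : Matrix (Fin 2) (Fin 2) ℝ).map Complex.ofReal
      - (!![c, -1 / 2; -1 / 2, e] : Matrix (Fin 2) (Fin 2) ℝ).map Complex.ofReal).det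
      = c * e * (lam - 1) ^ 2 - ((lam + 1) / 2) ^ 2 := by
  simp [det_fin_two]; ring

theorem mcap_jquad_unit_modulus_general (m a h : ℝ) (ha : 0 < a) (hh : 0 < h)
    (hsmall : h ^ 2 ≤ 12 * m * a) :
    let X : ℝ := 12 * m * a - h ^ 2
    let L : Matrix (Fin 2) (Fin 2) ℝ := !![X / (12 * h * a), 1 / 2; 1 / 2, -a / h]
    let R : Matrix (Fin 2) (Fin 2) ℝ := !![X / (12 * h * a), -1 / 2; -1 / 2, -a / h]
    let A : Matrix (Fin 2) (Fin 2) ℝ := L⁻¹ * R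
    ∀ lam ∈ spectrum ℂ (A.map Complex.ofReal), ‖lam‖ = 1 := by
  intro X L R A lam hlam
  have hX : 0 ≤ X := sub_nonneg.mpr hsmall
  have hce : 0 ≤ -(X / (12 * h * a) * (-a / h)) := by
    rw [neg_div, mul_neg, neg_neg]; positivity
  have hL : IsUnit L.det := by
    rw [isUnit_iff_ne_zero, show L.det = _ from det_jquad_lhs _ _]; nlinarith
  have hLA : L.map Complex.ofReal * A.map Complex.ofReal = R.map Complex.ofReal := by
    rw [← mul_nonsing_inv_cancel_left L R hL]
    exact (Matrix.map_mul (f := Complex.ofRealHom)).symm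
  have hpencil := not_isUnit_det_smul_sub_of_mul_eq hLA hlam
  rw [det_smul_jquad_lhs_sub_rhs, isUnit_iff_ne_zero, not_not] at hpencil
  exact Complex.norm_eq_one_of_mul_sub_one_sq_add_mul_add_one_sq_eq_zero hce
    (by norm_num : (0 : ℝ) < 1 / 4) (by push_cast at hpencil ⊢; linear_combination -hpencil)

/-- Every complex eigenvalue of the MCAP Jquad amplification matrix has modulus 1
whenever `h² ≤ 12ma`: the scheme is energy conserving and stable. -/
theorem mcap_jquad_unit_modulus (m a h : ℝ) (hm : 0 < m) (ha : 0 < a) (hh : 0 < h)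
    (hsmall : h ^ 2 ≤ 12 * m * a) :
    let X : ℝ := 12 * m * a - h ^ 2
    let L : Matrix (Fin 2) (Fin 2) ℝ := !![X / (12 * h * a), 1 / 2; 1 / 2, -a / h]
    let R : Matrix (Fin 2) (Fin 2) ℝ := !![X / (12 * h * a), -1 / 2; -1 / 2, -a / h]
    let A : Matrix (Fin 2) (Fin 2) ℝ := L⁻¹ * R
    ∀ lam ∈ spectrum ℂ (A.map Complex.ofReal), ‖lam‖ = 1 :=
  mcap_jquad_unit_modulus_general m a h ha hh hsmall
end

section
/- Let m, a be positive real numbers and let h be a nonzero real number; set X = 12ma − h². For any nonzero real s, define L_J(s) = [[X/(12sa), 1/2], [1/2, −a/s]], R_J(s) = [[X/(12sa), −1/2], [−1/2, −a/s]] and A_J(s) = L_J(s)⁻¹ · R_J(s). Then A_J(h) · A_J(−h) = I (the 2×2 identity matrix); that is, the MCAP Jquad algorithm is time reversible. -/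
/-!
Replacing `s` by `-s` flips the sign of the diagonal entries `X / (12 s a)` and `-a / s`,
so `L_J(-h) = -R_J(h)` and `R_J(-h) = -L_J(h)`. Hence
`A_J(h) A_J(-h) = L⁻¹ R R⁻¹ L = 1`, as soon as `L_J(h)` and `R_J(h)` are invertible; they have the
same determinant `-(6ma + h²)/(6h²)`, which is negative.
-/

namespace Matrix

variable {n α : Type*} [Fintype n] [DecidableEq n] [CommRing α]

theorem neg_inv_of_isUnit_det {A : Matrix n n α} (hA : IsUnit A.det) : (-A)⁻¹ = -A⁻¹ :=
  inv_eq_left_inv (by rw [neg_mul_neg, nonsing_inv_mul A hA])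

theorem inv_mul_mul_neg_inv_mul_neg {L R : Matrix n n α} (hL : IsUnit L.det)
    (hR : IsUnit R.det) : L⁻¹ * R * ((-R)⁻¹ * -L) = 1 := by
  rw [neg_inv_of_isUnit_det hR, neg_mul_neg, mul_assoc, ← mul_assoc R, mul_nonsing_inv R hR,
    one_mul, nonsing_inv_mul L hL]

end Matrix

/-- Time reversibility of the MCAP Jquad algorithm: stepping forward with step `h`
and then with step `-h` recovers the identity, `A_J(h) * A_J(-h) = 1`. -/
theorem mcap_jquad_time_reversible (m a h : ℝ) (hm : 0 < m) (ha : 0 < a) (hh : h ≠ 0) :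
    let X : ℝ := 12 * m * a - h ^ 2
    let L : ℝ → Matrix (Fin 2) (Fin 2) ℝ :=
      fun s => !![X / (12 * s * a), 1 / 2; 1 / 2, -a / s]
    let R : ℝ → Matrix (Fin 2) (Fin 2) ℝ :=
      fun s => !![X / (12 * s * a), -1 / 2; -1 / 2, -a / s]
    let A : ℝ → Matrix (Fin 2) (Fin 2) ℝ := fun s => (L s)⁻¹ * R s
    A h * A (-h) = 1 := by
  intro X L R A
  have hL_neg : L (-h) = -R h := by simp [L, R, div_neg, neg_div]
  have hR_neg : R (-h) = -L h := by simp [L, R, div_neg, neg_div]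
  have hdet_L : (L h).det = -(6 * m * a + h ^ 2) / (6 * h ^ 2) := by
    simp only [L, Matrix.det_fin_two_of, X]
    field_simp
    ring
  have hdet_R : (R h).det = (L h).det := by
    simp only [L, R, Matrix.det_fin_two_of]
    ring
  have hL : IsUnit (L h).det := by
    rw [hdet_L]
    exact (div_neg_of_neg_of_pos (by nlinarith [mul_pos hm ha]) (by positivity)).ne.isUnit
  show (L h)⁻¹ * R h * ((L (-h))⁻¹ * R (-h)) = 1
  rw [hL_neg, hR_neg]
  exact Matrix.inv_mul_mul_neg_inv_mul_neg hL (hdet_R ▸ hL)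
end

section
/- Let m, a, h be positive real numbers; set X = 12ma − h² and Y = 24ma + h². Define A_J = L_J⁻¹R_J with L_J = [[X/(12ha), 1/2], [1/2, −a/h]], R_J = [[X/(12ha), −1/2], [−1/2, −a/h]], and A_U = L_U⁻¹R_U with L_U = [[−m/h, Y/(6h²)], [4m/h, −2X/(3h²)]], R_U = [[3m/h, (Y − 6h²)/(6h²)], [−4m/h, −2X/(3h²)]]. Then the characteristic polynomials of A_U and A_J are equal: charpoly(A_U) = charpoly(A_J) = λ² − (2(6ma − 2h²)/(6ma + h²))·λ + 1. In particular the MCAP Jquad and Uquad algorithms have identical spectra. -/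
/-! Both amplification matrices have the form `A = L⁻¹ R` with `det R = det L`, so `det A = 1`
and the characteristic polynomial of `A` is `λ² - (tr A) λ + 1`. Writing `L⁻¹ = adj L / det L`,
the trace is `tr (adj L · R) / det L`, which for both pairs is `2(6ma - 2h²)/(6ma + h²)`. -/

open Polynomial

namespace Matrix

variable {n K : Type*} [Fintype n] [DecidableEq n] [Field K]

theorem trace_inv_mul (L R : Matrix n n K) :
    (L⁻¹ * R).trace = (L.adjugate * R).trace / L.det := by
  rw [inv_def, Ring.inverse_eq_inv, smul_mul, trace_smul, smul_eq_mul, div_eq_inv_mul]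

theorem det_inv_mul (L R : Matrix n n K) : (L⁻¹ * R).det = R.det / L.det := by
  rw [det_mul, det_nonsing_inv, Ring.inverse_eq_inv, div_eq_inv_mul]

theorem charpoly_inv_mul_fin_two_of_det_eq {L R : Matrix (Fin 2) (Fin 2) K} {t : K}
    (hL : L.det ≠ 0) (hdet : R.det = L.det) (htr : (L.adjugate * R).trace = t * L.det) :
    (L⁻¹ * R).charpoly = X ^ 2 - C t * X + 1 := by
  rw [charpoly_fin_two, trace_inv_mul, det_inv_mul, htr, hdet, mul_div_cancel_right₀ _ hL,
    div_self hL, C_1]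

end Matrix

/-- The MCAP Jquad and Uquad amplification matrices have equal characteristic polynomials,
namely `λ² - (2(6ma - 2h²)/(6ma + h²))·λ + 1`; in particular they have identical spectra. -/
theorem mcap_jquad_uquad_same_charpoly (m a h : ℝ) (hm : 0 < m) (ha : 0 < a) (hh : 0 < h) :
    let X : ℝ := 12 * m * a - h ^ 2
    let Y : ℝ := 24 * m * a + h ^ 2
    let LJ : Matrix (Fin 2) (Fin 2) ℝ := !![X / (12 * h * a), 1 / 2; 1 / 2, -a / h]
    let RJ : Matrix (Fin 2) (Fin 2) ℝ := !![X / (12 * h * a), -1 / 2; -1 / 2, -a / h]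
    let LU : Matrix (Fin 2) (Fin 2) ℝ :=
      !![-m / h, Y / (6 * h ^ 2); 4 * m / h, -2 * X / (3 * h ^ 2)]
    let RU : Matrix (Fin 2) (Fin 2) ℝ :=
      !![3 * m / h, (Y - 6 * h ^ 2) / (6 * h ^ 2); -4 * m / h, -2 * X / (3 * h ^ 2)]
    let AJ : Matrix (Fin 2) (Fin 2) ℝ := LJ⁻¹ * RJ
    let AU : Matrix (Fin 2) (Fin 2) ℝ := LU⁻¹ * RU
    AU.charpoly = AJ.charpoly ∧
      AJ.charpoly =
        Polynomial.X ^ 2 -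
          Polynomial.C (2 * (6 * m * a - 2 * h ^ 2) / (6 * m * a + h ^ 2)) * Polynomial.X + 1 := by
  intro X Y LJ RJ LU RU AJ AU
  have hLJ : LJ.det = -((6 * m * a + h ^ 2) / (6 * h ^ 2)) := by
    simp only [LJ, X, Matrix.det_fin_two_of]; field_simp; ring
  have hLU : LU.det = -(4 * m * (6 * m * a + h ^ 2) / (3 * h ^ 3)) := by
    simp only [LU, X, Y, Matrix.det_fin_two_of]; field_simp; ring
  have hJ : AJ.charpoly = Polynomial.X ^ 2 -
      Polynomial.C (2 * (6 * m * a - 2 * h ^ 2) / (6 * m * a + h ^ 2)) * Polynomial.X + 1 := by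
    refine Matrix.charpoly_inv_mul_fin_two_of_det_eq (by rw [hLJ, neg_ne_zero]; positivity) ?_ ?_
    · simp only [LJ, RJ, Matrix.det_fin_two_of]; ring
    · rw [hLJ]
      simp only [LJ, RJ, X, Matrix.adjugate_fin_two_of, Matrix.mul_fin_two, Matrix.trace_fin_two_of]
      field_simp; ring
  refine ⟨?_, hJ⟩
  rw [hJ]
  refine Matrix.charpoly_inv_mul_fin_two_of_det_eq (by rw [hLU, neg_ne_zero]; positivity) ?_ ?_
  · simp only [LU, RU, X, Y, Matrix.det_fin_two_of]; field_simp; ring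
  · rw [hLU]
    simp only [LU, RU, X, Y, Matrix.adjugate_fin_two_of, Matrix.mul_fin_two,
      Matrix.trace_fin_two_of]
    field_simp; ring
end

section
/- Let m, a be positive real numbers and h a nonzero real number; set X = 12ma − h² and Y = 24ma + h². For nonzero real s define L_U(s) = [[−m/s, Y/(6s²)], [4m/s, −2X/(3s²)]] and R_U(s) = [[3m/s, (Y − 6s²)/(6s²)], [−4m/s, −2X/(3s²)]], where in these formulas X and Y are evaluated with s² in place of h² (so X and Y are unchanged under s ↦ −s). Then, with M = [[−1, −1], [0, 1]], one has M · R_U(−h) = L_U(h) and M · L_U(−h) = R_U(h); consequently A_U(h) · A_U(−h) = I, where A_U(s) = L_U(s)⁻¹R_U(s), i.e. the MCAP Uquad algorithm is time reversible. -/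
/-!
The reflection `M = [[-1, -1], [0, 1]]` exchanges the two sides of the scheme,
`M · R_U(-h) = L_U(h)` and `M · L_U(-h) = R_U(h)`, entrywise because `4X - Y = Y - 6h²`.
Hence `A_U(h) = (M R_U(-h))⁻¹ (M L_U(-h)) = R_U(-h)⁻¹ L_U(-h) = A_U(-h)⁻¹`. The inverses exist
because, by the same identity, `L_U(s)` and `R_U(s)` both have determinant `2m(X - Y)/(3s³) ≠ 0`.
-/

theorem Matrix.inv_mul_mul_inv_mul_eq_one_of_swap {n α : Type*} [Fintype n] [DecidableEq n]
    [CommRing α] {M L R L' R' : Matrix n n α} (hM : IsUnit M.det) (hL : IsUnit L.det)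
    (hR : IsUnit R.det) (hL' : M * R = L') (hR' : M * L = R') :
    L'⁻¹ * R' * (L⁻¹ * R) = 1 := by
  subst hL' hR'
  rw [Matrix.mul_inv_rev]
  simp only [Matrix.mul_assoc, Matrix.nonsing_inv_mul_cancel_left _ _ hM,
    Matrix.mul_nonsing_inv_cancel_left _ _ hL, Matrix.nonsing_inv_mul _ hR]

noncomputable section

namespace MCAPUquad

variable (m X Y s : ℝ)

/-- `L_U(s)`, with `X` and `Y` as free parameters: in the scheme they are computed from the
step `h`, not from the argument `s`. -/
def leftMatrix : Matrix (Fin 2) (Fin 2) ℝ :=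
  !![-m / s, Y / (6 * s ^ 2); 4 * m / s, -2 * X / (3 * s ^ 2)]

/-- `R_U(s)`, with `X` and `Y` as free parameters. -/
def rightMatrix : Matrix (Fin 2) (Fin 2) ℝ :=
  !![3 * m / s, (Y - 6 * s ^ 2) / (6 * s ^ 2); -4 * m / s, -2 * X / (3 * s ^ 2)]

def reflection : Matrix (Fin 2) (Fin 2) ℝ := !![-1, -1; 0, 1]

theorem isUnit_det_reflection : IsUnit reflection.det := by
  simp [reflection, Matrix.det_fin_two_of]

theorem det_leftMatrix : (leftMatrix m X Y s).det = 2 * m * (X - Y) / (3 * s ^ 3) := by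
  rw [leftMatrix, Matrix.det_fin_two_of]
  ring

variable {m X Y s}

theorem isUnit_det_leftMatrix (hm : m ≠ 0) (hXY : X ≠ Y) (hs : s ≠ 0) :
    IsUnit (leftMatrix m X Y s).det := by
  rw [det_leftMatrix]
  exact (div_ne_zero (by simp [hm, sub_ne_zero.mpr hXY]) (by simp [hs])).isUnit

theorem det_rightMatrix (hXY : 4 * X - Y = Y - 6 * s ^ 2) :
    (rightMatrix m X Y s).det = (leftMatrix m X Y s).det := by
  rw [rightMatrix, leftMatrix, Matrix.det_fin_two_of, Matrix.det_fin_two_of]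
  linear_combination (-2 * m / (3 * s ^ 3)) * hXY

theorem reflection_mul_rightMatrix_neg (hXY : 4 * X - Y = Y - 6 * s ^ 2) :
    reflection * rightMatrix m X Y (-s) = leftMatrix m X Y s := by
  rw [reflection, rightMatrix, leftMatrix, Matrix.mul_fin_two, EmbeddingLike.apply_eq_iff_eq]
  simp only [Matrix.vecCons_inj, and_true]
  exact ⟨⟨by ring, by linear_combination hXY / (6 * s ^ 2)⟩, by ring, by ring⟩

theorem reflection_mul_leftMatrix_neg (hXY : 4 * X - Y = Y - 6 * s ^ 2) :
    reflection * leftMatrix m X Y (-s) = rightMatrix m X Y s := by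
  rw [reflection, rightMatrix, leftMatrix, Matrix.mul_fin_two, EmbeddingLike.apply_eq_iff_eq]
  simp only [Matrix.vecCons_inj, and_true]
  exact ⟨⟨by ring, by linear_combination hXY / (6 * s ^ 2)⟩, by ring, by ring⟩

end MCAPUquad

end

/-- Time reversibility of the MCAP Uquad algorithm: with `M = [[-1,-1],[0,1]]` one has
`M · R_U(-h) = L_U(h)` and `M · L_U(-h) = R_U(h)`, hence `A_U(h) · A_U(-h) = 1`. -/
theorem mcap_uquad_time_reversible (m a h : ℝ) (hm : 0 < m) (ha : 0 < a) (hh : h ≠ 0) :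
    let X : ℝ := 12 * m * a - h ^ 2
    let Y : ℝ := 24 * m * a + h ^ 2
    let LU : ℝ → Matrix (Fin 2) (Fin 2) ℝ :=
      fun s => !![-m / s, Y / (6 * s ^ 2); 4 * m / s, -2 * X / (3 * s ^ 2)]
    let RU : ℝ → Matrix (Fin 2) (Fin 2) ℝ :=
      fun s => !![3 * m / s, (Y - 6 * s ^ 2) / (6 * s ^ 2); -4 * m / s, -2 * X / (3 * s ^ 2)]
    let AU : ℝ → Matrix (Fin 2) (Fin 2) ℝ := fun s => (LU s)⁻¹ * RU s
    let M : Matrix (Fin 2) (Fin 2) ℝ := !![-1, -1; 0, 1]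
    M * RU (-h) = LU h ∧ M * LU (-h) = RU h ∧ AU h * AU (-h) = 1 := by
  intro X Y LU RU AU M
  have hXY : 4 * X - Y = Y - 6 * h ^ 2 := by simp only [X, Y]; ring
  have hXY_neg : 4 * X - Y = Y - 6 * (-h) ^ 2 := by rw [neg_sq]; exact hXY
  have hX_lt_Y : X < Y := by
    have := mul_pos hm ha
    simp only [X, Y]; nlinarith [sq_nonneg h]
  have hLU : M * RU (-h) = LU h := MCAPUquad.reflection_mul_rightMatrix_neg hXY
  have hRU : M * LU (-h) = RU h := MCAPUquad.reflection_mul_leftMatrix_neg hXY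
  have hL : IsUnit (LU (-h)).det :=
    MCAPUquad.isUnit_det_leftMatrix hm.ne' hX_lt_Y.ne (neg_ne_zero.mpr hh)
  have hR : IsUnit (RU (-h)).det := by
    change IsUnit (MCAPUquad.rightMatrix m X Y (-h)).det
    rwa [MCAPUquad.det_rightMatrix hXY_neg]
  exact ⟨hLU, hRU,
    Matrix.inv_mul_mul_inv_mul_eq_one_of_swap MCAPUquad.isUnit_det_reflection hL hR hLU hRU⟩
end

section
/- Let m, a, h be positive real numbers and set X = 12ma − h². Define the 2×2 real matrices L = [[X/(12ha), 1/2], [1/2, −X/(12hm)]] and R = [[X/(12ha), −1/2], [−1/2, −X/(12hm)]], and let A = L⁻¹ · R (the MCAP UJquad amplification matrix). Then L is invertible, det A = 1, and the eigenvalues of the complexification of A are exactly the two complex numbers λ± = ((h⁴ − 60amh² + 144m²a²) ± i·12h(12am − h²)√(am)) / (h⁴ + 12amh² + 144m²a²). -/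
/-! With `L = !![p, c; c, -q]` and `R` the same matrix with `c` replaced by `-c`, both have
determinant `-(pq + c²)`, so `det (L⁻¹R) = 1`, and the adjugate formula for `L⁻¹` gives
`tr (L⁻¹R) = 2(pq - c²)/(pq + c²)`. For `p = X/(12ha)`, `q = X/(12hm)`, `c = 1/2` this is
`2N/D` with `N = X² - 36h²am` and `D = X² + 36h²am`. The eigenvalues of a `2 × 2` matrix are the
roots of `z² - tr z + det`, and `(N ± iS)/D` are those roots because
`S = 12h(12am - h²)√(am)` satisfies `S² = 144h²amX²`, whence `N² + S² = D²`. -/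

open Matrix

namespace Matrix

variable {K : Type*} [Field K]

theorem spectrum_fin_two_eq_pair {M : Matrix (Fin 2) (Fin 2) K} {p q : K}
    (htr : p + q = M.trace) (hdet : p * q = M.det) : spectrum K M = {p, q} := by
  ext z
  rw [mem_spectrum_iff_isRoot_charpoly, charpoly_fin_two, ← htr, ← hdet]
  have hfactor : z ^ 2 - (p + q) * z + p * q = (z - p) * (z - q) := by ring
  simp [hfactor, sub_eq_zero]

theorem det_fin_two_of_symm (p q c : K) : !![p, c; c, -q].det = -(p * q + c ^ 2) := by
  rw [det_fin_two_of]; ring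

theorem det_inv_mul_neg_offDiag {p q c : K} (h : p * q + c ^ 2 ≠ 0) :
    (!![p, c; c, -q]⁻¹ * !![p, -c; -c, -q]).det = 1 := by
  rw [det_mul, det_nonsing_inv, Ring.inverse_eq_inv', det_fin_two_of_symm,
    det_fin_two_of_symm, neg_sq]
  exact inv_mul_cancel₀ (neg_ne_zero.2 h)

theorem trace_inv_mul_neg_offDiag {p q c : K} (h : p * q + c ^ 2 ≠ 0) :
    (!![p, c; c, -q]⁻¹ * !![p, -c; -c, -q]).trace = 2 * (p * q - c ^ 2) / (p * q + c ^ 2) := by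
  rw [inv_def, adjugate_fin_two_of, det_fin_two_of_symm, Ring.inverse_eq_inv', smul_mul,
    trace_smul, mul_fin_two, trace_fin_two_of, smul_eq_mul]
  field_simp
  ring

end Matrix

theorem spectrum_map_ofReal_fin_two {M : Matrix (Fin 2) (Fin 2) ℝ} {x y d : ℝ} (hd : d ≠ 0)
    (htr : M.trace = 2 * x / d) (hdet : M.det = (x ^ 2 + y ^ 2) / d ^ 2) :
    spectrum ℂ (M.map Complex.ofReal) =
      {(Complex.ofReal x + Complex.I * Complex.ofReal y) / Complex.ofReal d,
       (Complex.ofReal x - Complex.I * Complex.ofReal y) / Complex.ofReal d} := by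
  have hd' : (d : ℂ) ≠ 0 := Complex.ofReal_ne_zero.2 hd
  have htrC : (M.map Complex.ofReal).trace = M.trace :=
    (AddMonoidHom.map_trace Complex.ofRealHom M).symm
  have hdetC : (M.map Complex.ofReal).det = M.det :=
    (RingHom.map_det Complex.ofRealHom M).symm
  apply spectrum_fin_two_eq_pair
  · rw [htrC, htr]
    push_cast
    field_simp
    ring
  · rw [hdetC, hdet]
    push_cast
    field_simp
    linear_combination -(y : ℂ) ^ 2 * Complex.I_sq

/-- The MCAP UJquad amplification matrix: `L` is invertible, `det A = 1`, and the
eigenvalues of the complexification of `A` are exactly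
`((h⁴ - 60amh² + 144m²a²) ± i·12h(12am - h²)√(am)) / (h⁴ + 12amh² + 144m²a²)`. -/
theorem mcap_ujquad_eigenvalues (m a h : ℝ) (hm : 0 < m) (ha : 0 < a) (hh : 0 < h) :
    let X : ℝ := 12 * m * a - h ^ 2
    let L : Matrix (Fin 2) (Fin 2) ℝ :=
      !![X / (12 * h * a), 1 / 2; 1 / 2, -X / (12 * h * m)]
    let R : Matrix (Fin 2) (Fin 2) ℝ :=
      !![X / (12 * h * a), -1 / 2; -1 / 2, -X / (12 * h * m)]
    let A : Matrix (Fin 2) (Fin 2) ℝ := L⁻¹ * R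
    IsUnit L.det ∧ A.det = 1 ∧
      spectrum ℂ (A.map Complex.ofReal) =
        {(Complex.ofReal (h ^ 4 - 60 * a * m * h ^ 2 + 144 * m ^ 2 * a ^ 2) +
            Complex.I *
              Complex.ofReal (12 * h * (12 * a * m - h ^ 2) * Real.sqrt (a * m))) /
            Complex.ofReal (h ^ 4 + 12 * a * m * h ^ 2 + 144 * m ^ 2 * a ^ 2),
         (Complex.ofReal (h ^ 4 - 60 * a * m * h ^ 2 + 144 * m ^ 2 * a ^ 2) -
            Complex.I *
              Complex.ofReal (12 * h * (12 * a * m - h ^ 2) * Real.sqrt (a * m))) /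
            Complex.ofReal (h ^ 4 + 12 * a * m * h ^ 2 + 144 * m ^ 2 * a ^ 2)} := by
  intro X L R A
  have hpq : X / (12 * h * a) * (X / (12 * h * m)) + (1 / 2) ^ 2 ≠ 0 := by
    rw [div_mul_div_comm, ← sq]
    positivity
  have hL : L = !![X / (12 * h * a), 1 / 2; 1 / 2, -(X / (12 * h * m))] := by
    simp only [L, neg_div]
  have hA : A = !![X / (12 * h * a), 1 / 2; 1 / 2, -(X / (12 * h * m))]⁻¹ *
      !![X / (12 * h * a), -(1 / 2); -(1 / 2), -(X / (12 * h * m))] := by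
    simp only [A, L, R, neg_div]
  have hdetA : A.det = 1 := hA ▸ det_inv_mul_neg_offDiag hpq
  refine ⟨?_, hdetA, spectrum_map_ofReal_fin_two (by positivity) ?_ ?_⟩
  · rw [hL, det_fin_two_of_symm, isUnit_iff_ne_zero]
    exact neg_ne_zero.2 hpq
  · rw [hA, trace_inv_mul_neg_offDiag hpq]
    field_simp
    ring
  · have hsqrt : Real.sqrt (a * m) ^ 2 = a * m := Real.sq_sqrt (by positivity)
    rw [hdetA, eq_div_iff (by positivity), mul_pow, hsqrt]
    ring
end

section
/- Let m, a, h be positive real numbers and set X = 12ma − h². Let A = L⁻¹ · R with L = [[X/(12ha), 1/2], [1/2, −X/(12hm)]] and R = [[X/(12ha), −1/2], [−1/2, −X/(12hm)]]. Then every complex eigenvalue λ of the complexification of A satisfies |λ| = 1. In particular, the MCAP UJquad algorithm is unconditionally stable: its amplification matrix has spectral radius 1 for every time step h > 0. -/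
/-!
Write `p = X/(12ha)` and `q = X/(12hm)`. Explicitly,
`L⁻¹R = (pq + 1/4)⁻¹ • [[pq − 1/4, −q], [p, pq − 1/4]]`, which has determinant `1` and trace
`2(pq − 1/4)/(pq + 1/4)`. Since `pq = X²/(144h²am) ≥ 0`, the trace `t` lies in `[−2, 2]`, so
the characteristic polynomial `z² − tz + 1` has the roots `t/2 ± i√(1 − t²/4)`, both of modulus 1.
-/

open Complex

theorem Matrix.mem_spectrum_iff_fin_two {K : Type*} [Field K] (M : Matrix (Fin 2) (Fin 2) K)
    (z : K) : z ∈ spectrum K M ↔ z ^ 2 - M.trace * z + M.det = 0 := by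
  simp [Matrix.mem_spectrum_iff_isRoot_charpoly, Matrix.charpoly_fin_two]

theorem Complex.norm_eq_one_of_sq_sub_mul_add_one_eq_zero {t : ℝ} (ht : |t| ≤ 2) {z : ℂ}
    (hz : z ^ 2 - t * z + 1 = 0) : ‖z‖ = 1 := by
  set s := √(1 - t ^ 2 / 4)
  have hs : s ^ 2 = 1 - t ^ 2 / 4 := by
    refine Real.sq_sqrt ?_
    nlinarith [sq_abs t, abs_nonneg t]
  have hroots : (z - (t / 2 + s * I)) * (z - (t / 2 - s * I)) = 0 := by
    have hsC : (s : ℂ) ^ 2 = 1 - (t : ℂ) ^ 2 / 4 := by exact_mod_cast hs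
    linear_combination hz + hsC - (s : ℂ) ^ 2 * I_sq
  have hnorm : ∀ u : ℝ, u ^ 2 = s ^ 2 → ‖(t / 2 : ℝ) + u * I‖ = 1 := by
    intro u hu
    rw [norm_add_mul_I, hu, hs, show (t / 2) ^ 2 + (1 - t ^ 2 / 4) = 1 by ring, Real.sqrt_one]
  rcases mul_eq_zero.1 hroots with h | h
  · simpa [sub_eq_zero.1 h] using hnorm s rfl
  · simpa [sub_eq_zero.1 h, sub_eq_add_neg] using hnorm (-s) (neg_sq s)

theorem Matrix.norm_eq_one_of_mem_spectrum_map_ofReal {M : Matrix (Fin 2) (Fin 2) ℝ}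
    (hdet : M.det = 1) (htr : |M.trace| ≤ 2) {z : ℂ}
    (hz : z ∈ spectrum ℂ (M.map ofReal)) : ‖z‖ = 1 := by
  have hdetC : (M.map ofReal).det = M.det := (RingHom.map_det ofRealHom M).symm
  have htrC : (M.map ofReal).trace = M.trace := (AddMonoidHom.map_trace ofRealHom M).symm
  rw [Matrix.mem_spectrum_iff_fin_two, hdetC, htrC, hdet, ofReal_one] at hz
  exact Complex.norm_eq_one_of_sq_sub_mul_add_one_eq_zero htr hz

section UJquad

variable (p q : ℝ)

theorem ujquad_inv_mul_eq (hd : p * q + 1 / 4 ≠ 0) :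
    (!![p, 1 / 2; 1 / 2, -q])⁻¹ * !![p, -1 / 2; -1 / 2, -q] =
      (p * q + 1 / 4)⁻¹ • !![p * q - 1 / 4, -q; p, p * q - 1 / 4] := by
  have hL : IsUnit (!![p, 1 / 2; 1 / 2, -q] : Matrix (Fin 2) (Fin 2) ℝ).det := by
    rw [Matrix.det_fin_two_of, isUnit_iff_ne_zero]
    contrapose! hd
    linear_combination -hd
  let _ := Matrix.invertibleOfIsUnitDet _ hL
  rw [Matrix.inv_mul_eq_iff_eq_mul_of_invertible, Matrix.mul_smul, eq_inv_smul_iff₀ hd]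
  ext i j
  fin_cases i <;> fin_cases j <;> simp [Matrix.mul_apply, Fin.sum_univ_two] <;> ring

theorem det_ujquad (hd : p * q + 1 / 4 ≠ 0) :
    ((p * q + 1 / 4)⁻¹ • !![p * q - 1 / 4, -q; p, p * q - 1 / 4]).det = 1 := by
  rw [Matrix.det_smul, Fintype.card_fin, Matrix.det_fin_two_of, inv_pow,
    inv_mul_eq_one₀ (pow_ne_zero 2 hd)]
  ring

theorem abs_trace_ujquad_le (hpq : 0 ≤ p * q) :
    |((p * q + 1 / 4)⁻¹ • !![p * q - 1 / 4, -q; p, p * q - 1 / 4]).trace| ≤ 2 := by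
  rw [Matrix.trace_smul, Matrix.trace_fin_two_of, smul_eq_mul, abs_le]
  constructor
  · rw [le_inv_mul_iff₀ (by positivity)]; linarith
  · rw [inv_mul_le_iff₀ (by positivity)]; linarith

end UJquad

theorem ujquad_norm_eq_one_of_mem_spectrum {p q : ℝ} (hpq : 0 ≤ p * q) {z : ℂ}
    (hz : z ∈ spectrum ℂ
      (((!![p, 1 / 2; 1 / 2, -q])⁻¹ * !![p, -1 / 2; -1 / 2, -q]).map ofReal)) :
    ‖z‖ = 1 := by
  have hd : p * q + 1 / 4 ≠ 0 := by positivity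
  rw [ujquad_inv_mul_eq p q hd] at hz
  exact Matrix.norm_eq_one_of_mem_spectrum_map_ofReal (det_ujquad p q hd)
    (abs_trace_ujquad_le p q hpq) hz

theorem mcap_ujquad_unconditionally_stable_general (m a h : ℝ) (hm : 0 < m) (ha : 0 < a) :
    let X : ℝ := 12 * m * a - h ^ 2
    let L : Matrix (Fin 2) (Fin 2) ℝ :=
      !![X / (12 * h * a), 1 / 2; 1 / 2, -X / (12 * h * m)]
    let R : Matrix (Fin 2) (Fin 2) ℝ :=
      !![X / (12 * h * a), -1 / 2; -1 / 2, -X / (12 * h * m)]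
    let A : Matrix (Fin 2) (Fin 2) ℝ := L⁻¹ * R
    ∀ lam ∈ spectrum ℂ (A.map Complex.ofReal), ‖lam‖ = 1 := by
  intro X L R A lam hlam
  have hpq : 0 ≤ X / (12 * h * a) * (X / (12 * h * m)) := by
    rw [show X / (12 * h * a) * (X / (12 * h * m)) = (X / (12 * h)) ^ 2 / (a * m) by ring]
    positivity
  simp only [A, L, R, neg_div (12 * h * m) X] at hlam
  exact ujquad_norm_eq_one_of_mem_spectrum hpq hlam

/-- Unconditional stability of the MCAP UJquad algorithm: every complex eigenvalue of the
amplification matrix has modulus 1, for every time step `h > 0`. -/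
theorem mcap_ujquad_unconditionally_stable (m a h : ℝ) (hm : 0 < m) (ha : 0 < a)
    (hh : 0 < h) :
    let X : ℝ := 12 * m * a - h ^ 2
    let L : Matrix (Fin 2) (Fin 2) ℝ :=
      !![X / (12 * h * a), 1 / 2; 1 / 2, -X / (12 * h * m)]
    let R : Matrix (Fin 2) (Fin 2) ℝ :=
      !![X / (12 * h * a), -1 / 2; -1 / 2, -X / (12 * h * m)]
    let A : Matrix (Fin 2) (Fin 2) ℝ := L⁻¹ * R
    ∀ lam ∈ spectrum ℂ (A.map Complex.ofReal), ‖lam‖ = 1 :=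
  mcap_ujquad_unconditionally_stable_general m a h hm ha
end

section
/- Let m, a be positive real numbers and h a nonzero real number. For nonzero real s set X(s) = 12ma − s², L(s) = [[X(s)/(12sa), 1/2], [1/2, −X(s)/(12sm)]], R(s) = [[X(s)/(12sa), −1/2], [−1/2, −X(s)/(12sm)]] and A(s) = L(s)⁻¹ · R(s). Then A(h) · A(−h) = I (the 2×2 identity matrix); that is, the MCAP UJquad algorithm is time reversible. -/
/-!
Replacing `s` by `-s` leaves `X(s)` unchanged and flips the sign of the diagonal entries
`X(s)/(12sa)` and `-X(s)/(12sm)`, so `L(-s) = -R(s)` and `R(-s) = -L(s)`. Hence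
`A(-h) = R(h)⁻¹ L(h)` and `A(h) A(-h) = L(h)⁻¹ R(h) R(h)⁻¹ L(h) = 1`, provided `L(h)` and `R(h)`
are invertible: both have determinant `p q - 1/4` with `p q = -X(±h)²/(144 h² a m) ≤ 0`.
-/

namespace Matrix

section Inverse

variable {n α : Type*} [Fintype n] [DecidableEq n] [CommRing α]

theorem inv_neg_of_isUnit_det {M : Matrix n n α} (hM : IsUnit M.det) : (-M)⁻¹ = -M⁻¹ :=
  inv_eq_left_inv (by rw [neg_mul_neg, nonsing_inv_mul _ hM])

end Inverse

theorem neg_fin_two_of {α : Type*} [Neg α] (a b c d : α) :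
    -!![a, b; c, d] = !![-a, -b; -c, -d] := by
  ext i j; fin_cases i <;> fin_cases j <;> rfl

theorem det_neg_fin_two {α : Type*} [CommRing α] (M : Matrix (Fin 2) (Fin 2) α) :
    (-M).det = M.det := by
  simp [det_neg]

theorem det_fin_two_of_symm_neg {α : Type*} [CommRing α] [LinearOrder α]
    [IsStrictOrderedRing α] {p q c : α} (hpq : p * q ≤ 0) (hc : c ≠ 0) :
    !![p, c; c, q].det < 0 := by
  rw [det_fin_two_of]
  nlinarith [mul_self_pos.mpr hc]

end Matrix

theorem div_mul_neg_div_nonpos {α : Type*} [Field α] [LinearOrder α] [IsStrictOrderedRing α]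
    (x : α) {b c : α} (hbc : 0 ≤ b * c) : x / b * (-x / c) ≤ 0 := by
  rw [div_mul_div_comm, mul_neg, neg_div]
  exact neg_nonpos.mpr (div_nonneg (mul_self_nonneg x) hbc)

theorem mcap_ujquad_time_reversible_general (m a h : ℝ) (hm : 0 < m) (ha : 0 < a) :
    let X : ℝ → ℝ := fun s => 12 * m * a - s ^ 2
    let L : ℝ → Matrix (Fin 2) (Fin 2) ℝ :=
      fun s => !![X s / (12 * s * a), 1 / 2; 1 / 2, -X s / (12 * s * m)]
    let R : ℝ → Matrix (Fin 2) (Fin 2) ℝ :=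
      fun s => !![X s / (12 * s * a), -1 / 2; -1 / 2, -X s / (12 * s * m)]
    let A : ℝ → Matrix (Fin 2) (Fin 2) ℝ := fun s => (L s)⁻¹ * R s
    A h * A (-h) = 1 := by
  intro X L R A
  have hX (s : ℝ) : X (-s) = X s := by simp only [X, neg_sq]
  have hLneg (s : ℝ) : L (-s) = -R s := by
    simp only [L, R, Matrix.neg_fin_two_of, hX, mul_neg, neg_mul, div_neg, neg_div, neg_neg]
  have hRneg (s : ℝ) : R (-s) = -L s := by
    simp only [L, R, Matrix.neg_fin_two_of, hX, mul_neg, neg_mul, div_neg, neg_div, neg_neg]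
  have hdetL (s : ℝ) : (L s).det < 0 := by
    refine Matrix.det_fin_two_of_symm_neg (div_mul_neg_div_nonpos _ ?_) (by norm_num)
    nlinarith [sq_nonneg (12 * s), mul_pos ha hm]
  have hdetR : (R h).det < 0 := by
    rw [← neg_neg h, hRneg, Matrix.det_neg_fin_two]
    exact hdetL _
  show (L h)⁻¹ * R h * ((L (-h))⁻¹ * R (-h)) = 1
  rw [hLneg, hRneg]
  exact Matrix.inv_mul_mul_neg_inv_mul_neg (hdetL h).ne.isUnit hdetR.ne.isUnit

/-- Time reversibility of the MCAP UJquad algorithm: `A(h) * A(-h) = 1`,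
where `X(s) = 12ma - s²` genuinely depends on the step `s`. -/
theorem mcap_ujquad_time_reversible (m a h : ℝ) (hm : 0 < m) (ha : 0 < a) (hh : h ≠ 0) :
    let X : ℝ → ℝ := fun s => 12 * m * a - s ^ 2
    let L : ℝ → Matrix (Fin 2) (Fin 2) ℝ :=
      fun s => !![X s / (12 * s * a), 1 / 2; 1 / 2, -X s / (12 * s * m)]
    let R : ℝ → Matrix (Fin 2) (Fin 2) ℝ :=
      fun s => !![X s / (12 * s * a), -1 / 2; -1 / 2, -X s / (12 * s * m)]
    let A : ℝ → Matrix (Fin 2) (Fin 2) ℝ := fun s => (L s)⁻¹ * R s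
    A h * A (-h) = 1 :=
  mcap_ujquad_time_reversible_general m a h hm ha
end
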